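/- Let X be a real Hilbert space and Y a real normed vector space, let F : X → Y be Fréchet differentiable on X with derivative F', let f†, f₀ ∈ X, L ≥ 0 and β ≥ 0 with βL < 1, and assume: (i) the Lipschitz condition ‖F'(x) − F'(f†)‖ ≤ L ‖x − f†‖ for all x ∈ X (operator norm); (ii) the variational source condition −⟨h, f† − f₀⟩ ≤ β ‖F'(f†) h‖ for all h ∈ X. Let δ ≥ 0, C ≥ 0, τ ≥ 0, g^δ ∈ Y with ‖g^δ − F(f†)‖ ≤ δ, and let f ∈ X satisfy ‖f − f₀‖² ≤ ‖f† − f₀‖² + Cδ and the discrepancy bound ‖F(f) − g^δ‖ ≤ τδ. Then ‖f − f†‖² ≤ ((C + 2β(τ + 1)) / (1 − βL)) δ; in particular ‖f − f†‖ = O(√δ). -/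

import Mathlib

/-!
With `e = f - f†`, expanding `‖f - f₀‖² = ‖e + (f† - f₀)‖²` turns the norm bound on `f` into
`‖e‖² ≤ Cδ - 2⟪e, f† - f₀⟫`, and the source condition bounds the inner product by
`β ‖F'(f†) e‖`. The linearization `F'(f†) e` is within `(L/2)‖e‖²` of `F f - F f†` by the
Lipschitz condition, and `‖F f - F f†‖ ≤ (τ + 1)δ` by the discrepancy bound. Altogether
`‖e‖² ≤ (C + 2β(τ + 1))δ + βL‖e‖²`, and `βL < 1` lets the last term be absorbed.
-/

open Set

theorem norm_apply_one_le_half_of_norm_deriv_le {E : Type*} [NormedAddCommGroup E]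
    [NormedSpace ℝ E] {φ φ' : ℝ → E} {K : ℝ} (hφ : ∀ t, HasDerivAt φ (φ' t) t) (h0 : φ 0 = 0)
    (hbound : ∀ t ∈ Ico (0 : ℝ) 1, ‖φ' t‖ ≤ K * t) : ‖φ 1‖ ≤ K / 2 := by
  have hB : ∀ t : ℝ, HasDerivAt (fun s => K / 2 * s ^ 2) (K * t) t := fun t =>
    ((hasDerivAt_pow 2 t).const_mul (K / 2)).congr_deriv (by push_cast; ring)
  have := image_norm_le_of_norm_deriv_right_le_deriv_boundary
    (fun t _ => (hφ t).continuousAt.continuousWithinAt) (fun t _ => (hφ t).hasDerivWithinAt)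
    (by simp [h0]) hB hbound (right_mem_Icc.2 zero_le_one)
  simpa using this

theorem norm_image_sub_sub_fderiv_le_half_mul_sq {X Y : Type*} [NormedAddCommGroup X]
    [NormedSpace ℝ X] [NormedAddCommGroup Y] [NormedSpace ℝ Y]
    {F : X → Y} {F' : X → X →L[ℝ] Y} (hF : ∀ x, HasFDerivAt F (F' x) x) {a : X} {L : ℝ}
    (hLip : ∀ x, ‖F' x - F' a‖ ≤ L * ‖x - a‖) (b : X) :
    ‖F b - F a - F' a (b - a)‖ ≤ L / 2 * ‖b - a‖ ^ 2 := by
  set v := b - a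
  have hline : ∀ t : ℝ, HasDerivAt (fun t : ℝ => a + t • v) v t := fun t => by
    simpa using ((hasDerivAt_id t).smul_const v).const_add a
  have hφ : ∀ t : ℝ, HasDerivAt (fun t : ℝ => F (a + t • v) - F a - t • F' a v)
      (F' (a + t • v) v - F' a v) t := fun t =>
    (((hF _).comp_hasDerivAt t (hline t)).sub_const (F a)).sub
      (by simpa using (hasDerivAt_id t).smul_const (F' a v))
  have hbound : ∀ t ∈ Ico (0 : ℝ) 1, ‖F' (a + t • v) v - F' a v‖ ≤ L * ‖v‖ ^ 2 * t := by
    intro t ht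
    calc ‖F' (a + t • v) v - F' a v‖ ≤ ‖F' (a + t • v) - F' a‖ * ‖v‖ :=
          (F' (a + t • v) - F' a).le_opNorm v
      _ ≤ L * (t * ‖v‖) * ‖v‖ := by
          gcongr
          simpa [norm_smul, abs_of_nonneg ht.1] using hLip (a + t • v)
      _ = L * ‖v‖ ^ 2 * t := by ring
  have := norm_apply_one_le_half_of_norm_deriv_le hφ (by simp) hbound
  simp only [one_smul] at this
  rwa [add_sub_cancel, mul_div_right_comm] at this

theorem norm_fderiv_apply_sub_le {X Y : Type*} [NormedAddCommGroup X]
    [NormedSpace ℝ X] [NormedAddCommGroup Y] [NormedSpace ℝ Y]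
    {F : X → Y} {F' : X → X →L[ℝ] Y} (hF : ∀ x, HasFDerivAt F (F' x) x) {a : X} {L : ℝ}
    (hLip : ∀ x, ‖F' x - F' a‖ ≤ L * ‖x - a‖) (b : X) :
    ‖F' a (b - a)‖ ≤ ‖F b - F a‖ + L / 2 * ‖b - a‖ ^ 2 :=
  calc ‖F' a (b - a)‖ = ‖(F b - F a) - (F b - F a - F' a (b - a))‖ := by rw [sub_sub_cancel]
    _ ≤ ‖F b - F a‖ + ‖F b - F a - F' a (b - a)‖ := norm_sub_le _ _
    _ ≤ ‖F b - F a‖ + L / 2 * ‖b - a‖ ^ 2 := by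
        gcongr; exact norm_image_sub_sub_fderiv_le_half_mul_sq hF hLip b

theorem sq_norm_sub_le_of_sq_norm_sub_le_add {X : Type*} [NormedAddCommGroup X]
    [InnerProductSpace ℝ X] {f g f₀ : X} {ε : ℝ}
    (hf : ‖f - f₀‖ ^ 2 ≤ ‖g - f₀‖ ^ 2 + ε) :
    ‖f - g‖ ^ 2 ≤ ε + 2 * -inner ℝ (f - g) (g - f₀) := by
  have hsplit : ‖f - f₀‖ ^ 2 = ‖f - g‖ ^ 2 + 2 * inner ℝ (f - g) (g - f₀) + ‖g - f₀‖ ^ 2 := by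
    rw [← norm_add_sq_real, sub_add_sub_cancel]
  linarith

theorem newton_discrepancy_convergence_rate_general
    {X Y : Type*} [NormedAddCommGroup X] [InnerProductSpace ℝ X]
    [NormedAddCommGroup Y] [NormedSpace ℝ Y]
    (F : X → Y) (F' : X → X →L[ℝ] Y)
    (hF : ∀ x : X, HasFDerivAt F (F' x) x)
    (fdag f₀ : X) (L β : ℝ) (hβ : 0 ≤ β) (hβL : β * L < 1)
    (hLip : ∀ x : X, ‖F' x - F' fdag‖ ≤ L * ‖x - fdag‖)
    (hvsc : ∀ h : X, -(inner ℝ h (fdag - f₀) : ℝ) ≤ β * ‖F' fdag h‖)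
    (δ C τ : ℝ)
    (gδ : Y) (hgδ : ‖gδ - F fdag‖ ≤ δ) (f : X)
    (hf : ‖f - f₀‖ ^ 2 ≤ ‖fdag - f₀‖ ^ 2 + C * δ)
    (hdisc : ‖F f - gδ‖ ≤ τ * δ) :
    ‖f - fdag‖ ^ 2 ≤ (C + 2 * β * (τ + 1)) / (1 - β * L) * δ := by
  have hdata : ‖F f - F fdag‖ ≤ (τ + 1) * δ := by
    linarith [norm_sub_le_norm_sub_add_norm_sub (F f) gδ (F fdag)]
  have hlin := norm_fderiv_apply_sub_le hF hLip f
  have herr := sq_norm_sub_le_of_sq_norm_sub_le_add hf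
  have habsorb : (1 - β * L) * ‖f - fdag‖ ^ 2 ≤ (C + 2 * β * (τ + 1)) * δ := by
    nlinarith [hvsc (f - fdag), mul_le_mul_of_nonneg_left (hlin.trans (by gcongr)) hβ]
  rw [div_mul_eq_mul_div, le_div_iff₀ (by linarith)]
  linarith

/-- Convergence rate `‖f - f†‖ = O(√δ)` at the discrepancy-principle stopping index for
regularized Newton iterations, under a Lipschitz condition on `F'` at `f†` and a
variational source condition. -/
theorem newton_discrepancy_convergence_rate
    {X Y : Type*} [NormedAddCommGroup X] [InnerProductSpace ℝ X] [CompleteSpace X]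
    [NormedAddCommGroup Y] [NormedSpace ℝ Y]
    (F : X → Y) (F' : X → X →L[ℝ] Y)
    (hF : ∀ x : X, HasFDerivAt F (F' x) x)
    (fdag f₀ : X) (L β : ℝ) (hL : 0 ≤ L) (hβ : 0 ≤ β) (hβL : β * L < 1)
    (hLip : ∀ x : X, ‖F' x - F' fdag‖ ≤ L * ‖x - fdag‖)
    (hvsc : ∀ h : X, -(inner ℝ h (fdag - f₀) : ℝ) ≤ β * ‖F' fdag h‖)
    (δ C τ : ℝ) (hδ : 0 ≤ δ) (hC : 0 ≤ C) (hτ : 0 ≤ τ)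
    (gδ : Y) (hgδ : ‖gδ - F fdag‖ ≤ δ) (f : X)
    (hf : ‖f - f₀‖ ^ 2 ≤ ‖fdag - f₀‖ ^ 2 + C * δ)
    (hdisc : ‖F f - gδ‖ ≤ τ * δ) :
    ‖f - fdag‖ ^ 2 ≤ (C + 2 * β * (τ + 1)) / (1 - β * L) * δ :=
  newton_discrepancy_convergence_rate_general F F' hF fdag f₀ L β hβ hβL hLip hvsc δ C τ gδ hgδ f hf
    hdisc
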